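/- Let Δ be a 2-local inner derivation on K_n(R) and let i, j, p be pairwise distinct indices in {1,…,n}. If a, b ∈ K_n(R) satisfy Δ(s_{i,j}) = [a, s_{i,j}] and Δ(s_{i,p}) = [b, s_{i,p}], then a^{i,j} + a^{j,i} = b^{i,j} + b^{j,i}. -/

import Mathlib

def sMat {R : Type*} [CommRing R] {n : ℕ} (i j : Fin n) : Matrix (Fin n) (Fin n) R :=
  Matrix.single i j 1 - Matrix.single j i 1

lemma sMat_skew {R : Type*} [CommRing R] [StarRing R] {n : ℕ} (i j : Fin n) :
    ∀ k l, star ((sMat i j : Matrix (Fin n) (Fin n) R) k l) = - sMat i j l k := by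
  intro k l
  simp only [sMat, Matrix.sub_apply, Matrix.single, Matrix.of_apply, star_sub,
    neg_sub]
  split_ifs <;> simp only [star_one, star_zero] <;> first | ring1 | tauto

theorem two_local_derivation_entries_lemma_two
    {R : Type*} [CommRing R] [StarRing R]
    (I : R) (hI2 : I * I = -1) (hIstar : star I = -I)
    (n : ℕ) (hn : 1 < n)
    (Δ : Matrix (Fin n) (Fin n) R → Matrix (Fin n) (Fin n) R)
    (hΔ : ∀ x y : Matrix (Fin n) (Fin n) R,
        (∀ k l, star (x k l) = - x l k) → (∀ k l, star (y k l) = - y l k) →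
        ∃ c : Matrix (Fin n) (Fin n) R,
          (∀ k l, star (c k l) = - c l k) ∧
          Δ x = c * x - x * c ∧ Δ y = c * y - y * c)
    (i j p : Fin n) (hij : i ≠ j) (hip : i ≠ p) (hjp : j ≠ p)
    (a b : Matrix (Fin n) (Fin n) R)
    (ha : ∀ k l, star (a k l) = - a l k)
    (hb : ∀ k l, star (b k l) = - b l k)
    (haΔ : Δ (sMat i j) = a * sMat i j - sMat i j * a)
    (hbΔ : Δ (sMat i p) = b * sMat i p - sMat i p * b) :
    a i j + a j i = b i j + b j i := by
  obtain ⟨c, hc, h1, h2⟩ := hΔ (sMat i j) (sMat i p) (sMat_skew i j) (sMat_skew i p)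
  have E1 := congrFun (congrFun (haΔ.symm.trans h1) i) i
  have E2 := congrFun (congrFun (hbΔ.symm.trans h2) p) j
  have E3 := congrFun (congrFun (hbΔ.symm.trans h2) j) p
  simp [sMat, Matrix.sub_apply, Matrix.mul_sub, Matrix.sub_mul,
    hij, hip, hjp, hij.symm, hip.symm, hjp.symm] at E1 E2 E3
  linear_combination -E1 - E2 - E3
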